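/- arXiv:2310.08789 — 3 statements merged into one kernel-verified Lean document; each statement's English description precedes it below -/
import Mathlib

section
/- Let K ≥ 1, let A be a real K×K matrix with operator norm ‖A‖ < 1, let R be a symmetric positive definite K×K matrix, and let Σ₀ be a symmetric positive definite K×K matrix. Define Σ_t = (A Σ_{t−1} Aᵀ + R)(A Σ_{t−1} Aᵀ + R + I)⁻¹ for t ≥ 1. Then the sequence (Σ_t) converges: there exists a K×K matrix Σ* such that Σ_t → Σ* (entrywise, equivalently in operator norm) as t → ∞. -/
/-!
With `M(X) = A X Aᵀ + R`, the Riccati map is `F X = 1 - (M(X) + 1)⁻¹`. By the continuous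
functional calculus, `x ↦ (x + 1)⁻¹` sends `[0, ∞)`, which contains the spectrum of a positive
semidefinite `M`, into `(0, 1]`, so `F` preserves positive semidefiniteness and
`‖(M + 1)⁻¹‖ ≤ 1`. Then `P⁻¹ - Q⁻¹ = P⁻¹ (Q - P) Q⁻¹` gives `‖F X - F Y‖ ≤ ‖A‖² ‖X - Y‖` on
positive semidefinite matrices, and since `‖A‖ < 1` the iterates form a Cauchy sequence.
-/

open Matrix Filter

/-- The operator norm of a real `K × K` matrix induced by the Euclidean norm on `ℝ^K`. -/
noncomputable def opNorm {K : ℕ} (A : Matrix (Fin K) (Fin K) ℝ) : ℝ :=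
  ‖Matrix.toEuclideanCLM (𝕜 := ℝ) A‖

theorem cauchySeq_of_dist_succ_le_mul {α : Type*} [PseudoMetricSpace α] {u : ℕ → α} {q : ℝ}
    (hq₀ : 0 ≤ q) (hq₁ : q < 1)
    (h : ∀ n, dist (u (n + 1)) (u (n + 2)) ≤ q * dist (u n) (u (n + 1))) :
    CauchySeq u := by
  refine cauchySeq_of_le_geometric q (dist (u 0) (u 1)) hq₁ fun n => ?_
  induction n with
  | zero => simp
  | succ n ih =>
    calc dist (u (n + 1)) (u (n + 2)) ≤ q * dist (u n) (u (n + 1)) := h n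
      _ ≤ q * (dist (u 0) (u 1) * q ^ n) := by gcongr
      _ = dist (u 0) (u 1) * q ^ (n + 1) := by ring

section Riccati

open scoped Matrix.Norms.L2Operator MatrixOrder

variable {n : Type*} [Fintype n]

theorem Matrix.PosSemidef.mul_mul_transpose_add {A X R : Matrix n n ℝ} (hX : X.PosSemidef)
    (hR : R.PosSemidef) : (A * X * Aᵀ + R).PosSemidef := by
  simpa only [conjTranspose_eq_transpose_of_trivial] using
    (hX.mul_mul_conjTranspose_same A).add hR

variable [DecidableEq n]

namespace Matrix.PosSemidef

variable {M : Matrix n n ℝ}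

theorem spectrum_nonneg (hM : M.PosSemidef) : ∀ x ∈ spectrum ℝ M, 0 ≤ x :=
  spectrum_nonneg_of_nonneg (nonneg_iff_posSemidef.mpr hM)

theorem isUnit_add_one (hM : M.PosSemidef) : IsUnit (M + 1) :=
  (PosDef.posSemidef_add hM PosDef.one).isUnit

theorem inv_add_one_eq_cfc (hM : M.PosSemidef) :
    (M + 1)⁻¹ = cfc (fun x : ℝ => (x + 1)⁻¹) M := by
  rw [cfc_inv (· + 1) M (fun x hx => by linarith [hM.spectrum_nonneg x hx]),
    cfc_add_const 1 (fun x => x) M, cfc_id' ℝ M, map_one, nonsing_inv_eq_ringInverse]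

theorem norm_inv_add_one_le (hM : M.PosSemidef) : ‖(M + 1)⁻¹‖ ≤ 1 := by
  rw [hM.inv_add_one_eq_cfc]
  refine norm_cfc_le zero_le_one fun x hx => ?_
  have hx₀ := hM.spectrum_nonneg x hx
  rw [Real.norm_eq_abs, abs_inv, abs_of_nonneg (by linarith)]
  exact inv_le_one_of_one_le₀ (by linarith)

theorem one_sub_inv_add_one (hM : M.PosSemidef) : (1 - (M + 1)⁻¹).PosSemidef := by
  have hcont : ContinuousOn (fun x : ℝ => (x + 1)⁻¹) (spectrum ℝ M) :=
    (continuous_add_const 1).continuousOn.inv₀ fun x hx => by linarith [hM.spectrum_nonneg x hx]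
  rw [hM.inv_add_one_eq_cfc, ← nonneg_iff_posSemidef, ← cfc_one ℝ M, ← cfc_sub ..]
  refine cfc_nonneg fun x hx => sub_nonneg.mpr ?_
  exact inv_le_one_of_one_le₀ (by linarith [hM.spectrum_nonneg x hx])

theorem mul_inv_add_one (hM : M.PosSemidef) : M * (M + 1)⁻¹ = 1 - (M + 1)⁻¹ := by
  rw [eq_sub_iff_add_eq, ← add_one_mul,
    mul_nonsing_inv _ ((isUnit_iff_isUnit_det _).mp hM.isUnit_add_one)]

end Matrix.PosSemidef

noncomputable def riccatiMap (A R X : Matrix n n ℝ) : Matrix n n ℝ :=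
  (A * X * Aᵀ + R) * (A * X * Aᵀ + R + 1)⁻¹

variable {A R X Y : Matrix n n ℝ}

theorem riccatiMap_eq_one_sub_inv (hX : X.PosSemidef) (hR : R.PosSemidef) :
    riccatiMap A R X = 1 - (A * X * Aᵀ + R + 1)⁻¹ :=
  (hX.mul_mul_transpose_add hR).mul_inv_add_one

theorem Matrix.PosSemidef.riccatiMap (hX : X.PosSemidef) (hR : R.PosSemidef) :
    (riccatiMap A R X).PosSemidef := by
  rw [riccatiMap_eq_one_sub_inv hX hR]
  exact (hX.mul_mul_transpose_add hR).one_sub_inv_add_one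

theorem dist_riccatiMap_le (hX : X.PosSemidef) (hY : Y.PosSemidef) (hR : R.PosSemidef) :
    dist (riccatiMap A R X) (riccatiMap A R Y) ≤ ‖A‖ ^ 2 * dist X Y := by
  have hMX := hX.mul_mul_transpose_add (A := A) hR
  have hMY := hY.mul_mul_transpose_add (A := A) hR
  have hdiff : riccatiMap A R X - riccatiMap A R Y =
      (A * Y * Aᵀ + R + 1)⁻¹ * (A * (X - Y) * Aᵀ) * (A * X * Aᵀ + R + 1)⁻¹ := by
    rw [riccatiMap_eq_one_sub_inv hX hR, riccatiMap_eq_one_sub_inv hY hR, sub_sub_sub_cancel_left,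
      inv_sub_inv (iff_of_true hMY.isUnit_add_one hMX.isUnit_add_one)]
    congr 2
    noncomm_ring
  have hAt : ‖Aᵀ‖ = ‖A‖ := by
    rw [← conjTranspose_eq_transpose_of_trivial, l2_opNorm_conjTranspose]
  rw [dist_eq_norm, dist_eq_norm, hdiff]
  calc _ ≤ ‖(A * Y * Aᵀ + R + 1)⁻¹‖ * (‖A‖ * ‖X - Y‖ * ‖Aᵀ‖) * ‖(A * X * Aᵀ + R + 1)⁻¹‖ := by
        refine norm_mul₃_le.trans ?_
        gcongr
        exact norm_mul₃_le
    _ ≤ 1 * (‖A‖ * ‖X - Y‖ * ‖A‖) * 1 := by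
        rw [hAt]
        gcongr
        exacts [hMY.norm_inv_add_one_le, hMX.norm_inv_add_one_le]
    _ = ‖A‖ ^ 2 * ‖X - Y‖ := by ring

end Riccati

theorem riccati_converges_general {K : ℕ}
    (A R S0 : Matrix (Fin K) (Fin K) ℝ)
    (hA : opNorm A < 1) (hR : R.PosDef) (hS0 : S0.PosDef)
    (S : ℕ → Matrix (Fin K) (Fin K) ℝ)
    (hinit : S 0 = S0)
    (hrec : ∀ t : ℕ, S (t + 1) = (A * S t * Aᵀ + R) * (A * S t * Aᵀ + R + 1)⁻¹) :
    ∃ Sstar : Matrix (Fin K) (Fin K) ℝ, Tendsto S atTop (nhds Sstar) := by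
  have hS : ∀ t, S (t + 1) = riccatiMap A R (S t) := hrec
  have hpsd : ∀ t, (S t).PosSemidef := by
    intro t
    induction t with
    | zero => exact hinit ▸ hS0.posSemidef
    | succ t ih => exact hS t ▸ ih.riccatiMap hR.posSemidef
  -- `opNorm A` is the L2 operator norm `‖A‖`, which induces the entrywise topology on matrices.
  open scoped Matrix.Norms.L2Operator in
  have hcauchy : CauchySeq S := by
    refine cauchySeq_of_dist_succ_le_mul (sq_nonneg ‖A‖)
      (pow_lt_one₀ (norm_nonneg A) hA two_ne_zero) fun t => ?_
    rw [hS (t + 1), hS t]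
    exact dist_riccatiMap_le (hpsd t) ((hpsd t).riccatiMap hR.posSemidef) hR.posSemidef
  exact cauchySeq_tendsto_of_complete hcauchy

/-- convergence of the Riccati sequence
`Σ_t = (A Σ_{t−1} Aᵀ + R)(A Σ_{t−1} Aᵀ + R + I)⁻¹`, starting from a symmetric positive
definite `Σ₀`, when `‖A‖ < 1` and `R` is symmetric positive definite. -/
theorem riccati_converges {K : ℕ} (hK : 1 ≤ K)
    (A R S0 : Matrix (Fin K) (Fin K) ℝ)
    (hA : opNorm A < 1) (hR : R.PosDef) (hS0 : S0.PosDef)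
    (S : ℕ → Matrix (Fin K) (Fin K) ℝ)
    (hinit : S 0 = S0)
    (hrec : ∀ t : ℕ, S (t + 1) = (A * S t * Aᵀ + R) * (A * S t * Aᵀ + R + 1)⁻¹) :
    ∃ Sstar : Matrix (Fin K) (Fin K) ℝ, Tendsto S atTop (nhds Sstar) :=
  riccati_converges_general A R S0 hA hR hS0 S hinit hrec
end

section
/- Let A be a real K×K matrix, μ ∈ ℝ^K, and let Σ and R be symmetric positive definite real K×K matrices; set S := A Σ Aᵀ + R. Then for all x, y ∈ ℝ^K, ∫_{ℝ^K} N(x'; μ, Σ) · N(x; A x', R) · N(y; x, I) dx' = N(y; A μ, S + I) · N(x; μ', Σ'), where Σ' := S(S + I)⁻¹ and μ' := (S + I)⁻¹ A μ + Σ' y; moreover Σ' is symmetric positive definite. (This is the forward-variable recursion: a Gaussian forward variable stays Gaussian, with mean and covariance updated by these formulas, and the accumulated scalar factor equals N(y; A μ, S + I).) -/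
/-!
Completing the square in `x'` writes the product of the first two densities as
`N(x; A μ, S) · N(x'; ·, ·)`, where `S = A Σ Aᵀ + R` appears through the Woodbury identity
(exponent) and the matrix determinant lemma (normalizing constant); integrating out `x'` leaves
`N(x; A μ, S)`. The same identity with `A = R = I` and `S` in place of `Σ` splits
`N(x; A μ, S) · N(y; x, I)` into `N(y; A μ, S + I) · N(x; μ', Σ')`, because
`(S⁻¹ + I)⁻¹ = S (S + I)⁻¹`.
-/

open Matrix MeasureTheory

/-- The Gaussian density `N(x; m, S)` on `ℝ^K` with mean `m` and (symmetric positive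
definite) covariance matrix `S`. -/
noncomputable def gaussDensity {K : ℕ} (m : Fin K → ℝ) (S : Matrix (Fin K) (Fin K) ℝ)
    (x : Fin K → ℝ) : ℝ :=
  (Real.sqrt ((2 * Real.pi) ^ K * S.det))⁻¹ *
    Real.exp (-(1 / 2 : ℝ) * ((x - m) ⬝ᵥ (S⁻¹ *ᵥ (x - m))))

section GaussianIntegral

variable {ι : Type*} [Fintype ι]

theorem integral_comp_mulVec [DecidableEq ι] {E : Type*} [NormedAddCommGroup E]
    [NormedSpace ℝ E] {Q : Matrix ι ι ℝ} (hQ : Q.det ≠ 0) (f : (ι → ℝ) → E) :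
    ∫ v, f (Q *ᵥ v) = |Q.det|⁻¹ • ∫ u, f u := by
  have hdet : LinearMap.det (toLin' Q) ≠ 0 := by rwa [LinearMap.det_toLin']
  have hemb : MeasurableEmbedding (toLin' Q) :=
    ((toLin' Q).isClosedEmbedding_of_injective
      (LinearMap.ker_eq_bot.mpr (mulVec_injective_of_det_ne_zero hQ))).measurableEmbedding
  change ∫ v, f (toLin' Q v) = _
  rw [← hemb.integral_map, Real.map_linearMap_volume_pi_eq_smul_volume_pi hdet,
    LinearMap.det_toLin', integral_smul_measure, ENNReal.toReal_ofReal (by positivity), abs_inv]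

theorem integral_exp_neg_half_dotProduct_self :
    ∫ u : ι → ℝ, Real.exp (-(1 / 2) * (u ⬝ᵥ u)) = √((2 * Real.pi) ^ Fintype.card ι) := by
  have hnorm (x : EuclideanSpace ℝ ι) :
      (MeasurableEquiv.toLp 2 (ι → ℝ)).symm x ⬝ᵥ (MeasurableEquiv.toLp 2 (ι → ℝ)).symm x =
        ‖x‖ ^ 2 := by
    rw [EuclideanSpace.norm_eq, Real.sq_sqrt (by positivity)]
    simp [dotProduct, sq]
  rw [← (EuclideanSpace.volume_preserving_symm_measurableEquiv_toLp ι).integral_comp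
    (MeasurableEquiv.toLp 2 (ι → ℝ)).symm.measurableEmbedding]
  simp only [hnorm]
  rw [GaussianFourier.integral_rexp_neg_mul_sq_norm (by norm_num), finrank_euclideanSpace,
    Real.sqrt_eq_rpow, ← Real.rpow_natCast, ← Real.rpow_mul (by positivity)]
  norm_num [div_eq_mul_inv, mul_comm]

open scoped MatrixOrder in
theorem integral_exp_neg_half_dotProduct_mulVec [DecidableEq ι] {P : Matrix ι ι ℝ}
    (hP : P.PosDef) :
    ∫ v, Real.exp (-(1 / 2) * (v ⬝ᵥ P *ᵥ v)) = √((2 * Real.pi) ^ Fintype.card ι / P.det) := by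
  -- substitute `u = √P v`
  set Q := CFC.sqrt P
  have hQt : Qᵀ = Q := (CFC.sqrt_nonneg P).posSemidef.isHermitian
  have hQQ : Q * Q = P := CFC.sqrt_mul_sqrt_self P hP.posSemidef.nonneg
  have hdet : Q.det ^ 2 = P.det := by rw [sq, ← det_mul, hQQ]
  have hquad (v : ι → ℝ) : v ⬝ᵥ P *ᵥ v = Q *ᵥ v ⬝ᵥ Q *ᵥ v := by
    rw [← hQQ, ← mulVec_mulVec, dotProduct_mulVec, ← mulVec_transpose, hQt]
  simp only [hquad]
  rw [integral_comp_mulVec (f := fun u => Real.exp (-(1 / 2) * (u ⬝ᵥ u)))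
      (pow_ne_zero_iff two_ne_zero |>.mp (hdet ▸ hP.det_pos.ne')),
    integral_exp_neg_half_dotProduct_self, smul_eq_mul, ← Real.sqrt_sq_eq_abs, hdet,
    Real.sqrt_div' _ hP.det_pos.le, div_eq_inv_mul]

theorem integral_exp_neg_half_sub_dotProduct_mulVec [DecidableEq ι] {P : Matrix ι ι ℝ}
    (hP : P.PosDef) (m : ι → ℝ) :
    ∫ v, Real.exp (-(1 / 2) * ((v - m) ⬝ᵥ P *ᵥ (v - m))) =
      √((2 * Real.pi) ^ Fintype.card ι / P.det) := by
  rw [integral_sub_right_eq_self (fun v => Real.exp (-(1 / 2) * (v ⬝ᵥ P *ᵥ v))) m]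
  exact integral_exp_neg_half_dotProduct_mulVec hP

end GaussianIntegral

section CompletingSquare

variable {m n α : Type*} [Fintype m] [Fintype n] [CommRing α]

theorem Matrix.mulVec_dotProduct (A : Matrix m n α) (u : n → α) (w : m → α) :
    A *ᵥ u ⬝ᵥ w = u ⬝ᵥ Aᵀ *ᵥ w := by
  rw [dotProduct_comm, dotProduct_transpose_mulVec]

theorem Matrix.IsSymm.dotProduct_mulVec_comm {M : Matrix n n α} (hM : M.IsSymm) (u w : n → α) :
    u ⬝ᵥ M *ᵥ w = w ⬝ᵥ M *ᵥ u := by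
  conv_rhs => rw [← hM.eq, dotProduct_transpose_mulVec]

theorem Matrix.IsSymm.sub_dotProduct_mulVec_sub {M : Matrix n n α} (hM : M.IsSymm)
    (u w : n → α) :
    (u - w) ⬝ᵥ M *ᵥ (u - w) = u ⬝ᵥ M *ᵥ u - 2 * (u ⬝ᵥ M *ᵥ w) + w ⬝ᵥ M *ᵥ w := by
  rw [mulVec_sub, dotProduct_sub, sub_dotProduct, sub_dotProduct, hM.dotProduct_mulVec_comm w u]
  ring

variable [DecidableEq n]

theorem Matrix.IsSymm.dotProduct_mulVec_sub_two_mul_dotProduct {P : Matrix n n α}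
    (hP : P.IsSymm) (hdet : IsUnit P.det) (u b : n → α) :
    u ⬝ᵥ P *ᵥ u - 2 * (u ⬝ᵥ b) =
      (u - P⁻¹ *ᵥ b) ⬝ᵥ P *ᵥ (u - P⁻¹ *ᵥ b) - b ⬝ᵥ P⁻¹ *ᵥ b := by
  rw [hP.sub_dotProduct_mulVec_sub, mulVec_mulVec, mul_nonsing_inv _ hdet, one_mulVec,
    dotProduct_comm (P⁻¹ *ᵥ b)]
  ring

theorem dotProduct_mulVec_add_dotProduct_mulVec_sub_mulVec {Ci : Matrix n n α}
    {Ri : Matrix m m α} (hCi : Ci.IsSymm) (hRi : Ri.IsSymm) (A : Matrix m n α)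
    (hP : IsUnit (Ci + Aᵀ * Ri * A).det) (u : n → α) (w : m → α) :
    u ⬝ᵥ Ci *ᵥ u + (w - A *ᵥ u) ⬝ᵥ Ri *ᵥ (w - A *ᵥ u) =
      w ⬝ᵥ (Ri - Ri * A * (Ci + Aᵀ * Ri * A)⁻¹ * Aᵀ * Ri) *ᵥ w +
        (u - ((Ci + Aᵀ * Ri * A)⁻¹ * Aᵀ * Ri) *ᵥ w) ⬝ᵥ
          (Ci + Aᵀ * Ri * A) *ᵥ (u - ((Ci + Aᵀ * Ri * A)⁻¹ * Aᵀ * Ri) *ᵥ w) := by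
  set P := Ci + Aᵀ * Ri * A
  have hPsymm : P.IsSymm := hCi.add (by simp [IsSymm, transpose_mul, hRi.eq, Matrix.mul_assoc])
  set b := (Aᵀ * Ri) *ᵥ w
  have hexpand : u ⬝ᵥ Ci *ᵥ u + (w - A *ᵥ u) ⬝ᵥ Ri *ᵥ (w - A *ᵥ u) =
      u ⬝ᵥ P *ᵥ u - 2 * (u ⬝ᵥ b) + w ⬝ᵥ Ri *ᵥ w := by
    rw [hRi.sub_dotProduct_mulVec_sub, hRi.dotProduct_mulVec_comm w (A *ᵥ u), mulVec_dotProduct,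
      mulVec_dotProduct, add_mulVec, dotProduct_add]
    simp only [b, mulVec_mulVec, Matrix.mul_assoc]
    ring
  have hcorr : b ⬝ᵥ P⁻¹ *ᵥ b = w ⬝ᵥ (Ri * A * P⁻¹ * Aᵀ * Ri) *ᵥ w := by
    simp only [b, mulVec_dotProduct, mulVec_mulVec, transpose_mul, transpose_transpose, hRi.eq,
      Matrix.mul_assoc]
  have hgain : P⁻¹ *ᵥ b = (P⁻¹ * Aᵀ * Ri) *ᵥ w := by
    simp only [b, mulVec_mulVec, Matrix.mul_assoc]
  rw [hexpand, hPsymm.dotProduct_mulVec_sub_two_mul_dotProduct hP, hcorr, hgain, sub_mulVec,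
    dotProduct_sub]
  ring

end CompletingSquare

section PosDef

variable {m n : Type*} [Fintype m] [Fintype n] {C : Matrix n n ℝ} {R : Matrix m m ℝ}

theorem Matrix.PosDef.mul_mul_transpose_add (hC : C.PosDef) (hR : R.PosDef)
    (A : Matrix m n ℝ) : (A * C * Aᵀ + R).PosDef := by
  have h := hC.posSemidef.mul_mul_conjTranspose_same A
  rw [conjTranspose_eq_transpose_of_trivial] at h
  exact PosDef.posSemidef_add h hR

theorem Matrix.PosDef.inv_add_transpose_mul_inv_mul [DecidableEq m] [DecidableEq n]
    (hC : C.PosDef) (hR : R.PosDef) (A : Matrix m n ℝ) : (C⁻¹ + Aᵀ * R⁻¹ * A).PosDef := by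
  have h := hR.inv.posSemidef.conjTranspose_mul_mul_same A
  rw [conjTranspose_eq_transpose_of_trivial] at h
  exact hC.inv.add_posSemidef h

theorem Matrix.PosDef.inv_add_one_inv [DecidableEq n] {S : Matrix n n ℝ} (hS : S.PosDef) :
    (S⁻¹ + 1)⁻¹ = S * (S + 1)⁻¹ := by
  refine inv_eq_right_inv ?_
  rw [← Matrix.mul_assoc, Matrix.add_mul, nonsing_inv_mul _ hS.det_pos.ne'.isUnit,
    Matrix.one_mul, add_comm, mul_nonsing_inv _ (hS.add .one).det_pos.ne'.isUnit]

end PosDef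

section GaussDensity

variable {K L : ℕ}

theorem gaussDensity_mul_gaussDensity_eq {m₁ x₁ m₄ x₄ : Fin K → ℝ} {m₂ x₂ m₃ x₃ : Fin L → ℝ}
    {S₁ S₄ : Matrix (Fin K) (Fin K) ℝ} {S₂ S₃ : Matrix (Fin L) (Fin L) ℝ}
    (hS₁ : 0 ≤ S₁.det) (hS₃ : 0 ≤ S₃.det) (hdet : S₁.det * S₂.det = S₃.det * S₄.det)
    (hexp : (x₁ - m₁) ⬝ᵥ S₁⁻¹ *ᵥ (x₁ - m₁) + (x₂ - m₂) ⬝ᵥ S₂⁻¹ *ᵥ (x₂ - m₂) =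
      (x₃ - m₃) ⬝ᵥ S₃⁻¹ *ᵥ (x₃ - m₃) + (x₄ - m₄) ⬝ᵥ S₄⁻¹ *ᵥ (x₄ - m₄)) :
    gaussDensity m₁ S₁ x₁ * gaussDensity m₂ S₂ x₂ =
      gaussDensity m₃ S₃ x₃ * gaussDensity m₄ S₄ x₄ := by
  have hconst : (√((2 * Real.pi) ^ K * S₁.det))⁻¹ * (√((2 * Real.pi) ^ L * S₂.det))⁻¹ =
      (√((2 * Real.pi) ^ L * S₃.det))⁻¹ * (√((2 * Real.pi) ^ K * S₄.det))⁻¹ := by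
    rw [← mul_inv, ← mul_inv, ← Real.sqrt_mul (by positivity), ← Real.sqrt_mul (by positivity)]
    congr 2
    linear_combination (2 * Real.pi) ^ K * (2 * Real.pi) ^ L * hdet
  unfold gaussDensity
  calc _ = (√((2 * Real.pi) ^ K * S₁.det))⁻¹ * (√((2 * Real.pi) ^ L * S₂.det))⁻¹ *
        Real.exp (-(1 / 2) * ((x₁ - m₁) ⬝ᵥ S₁⁻¹ *ᵥ (x₁ - m₁) +
          (x₂ - m₂) ⬝ᵥ S₂⁻¹ *ᵥ (x₂ - m₂))) := by
        rw [mul_add, Real.exp_add]; ring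
    _ = _ := by
        rw [hconst, hexp, mul_add, Real.exp_add]; ring

theorem gaussDensity_mul_gaussDensity_mulVec {C : Matrix (Fin K) (Fin K) ℝ}
    {R : Matrix (Fin L) (Fin L) ℝ} (hC : C.PosDef) (hR : R.PosDef)
    (A : Matrix (Fin L) (Fin K) ℝ) (μ v : Fin K → ℝ) (x : Fin L → ℝ) :
    gaussDensity μ C v * gaussDensity (A *ᵥ v) R x =
      gaussDensity (A *ᵥ μ) (A * C * Aᵀ + R) x *
        gaussDensity (μ + ((C⁻¹ + Aᵀ * R⁻¹ * A)⁻¹ * Aᵀ * R⁻¹) *ᵥ (x - A *ᵥ μ))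
          (C⁻¹ + Aᵀ * R⁻¹ * A)⁻¹ v := by
  set P := C⁻¹ + Aᵀ * R⁻¹ * A
  have hP : P.PosDef := hC.inv_add_transpose_mul_inv_mul hR A
  have hS : (A * C * Aᵀ + R).PosDef := hC.mul_mul_transpose_add hR A
  have hdetS : (A * C * Aᵀ + R).det = R.det * (C.det * P.det) := by
    rw [add_comm, Matrix.mul_assoc, det_add_mul _ _ hR.det_pos.ne'.isUnit, ← det_mul]
    congr 2
    rw [Matrix.mul_add, mul_nonsing_inv _ hC.det_pos.ne'.isUnit]
    simp only [Matrix.mul_assoc]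
  have hwoodbury : (A * C * Aᵀ + R)⁻¹ = R⁻¹ - R⁻¹ * A * P⁻¹ * Aᵀ * R⁻¹ := by
    rw [add_comm]
    exact add_mul_mul_inv_eq_sub _ _ _ _ hR.isUnit hC.isUnit hP.isUnit
  refine gaussDensity_mul_gaussDensity_eq hC.det_pos.le hS.det_pos.le ?_ ?_
  · rw [det_nonsing_inv, Ring.inverse_eq_inv', hdetS]
    field_simp [hP.det_pos.ne']
  · have hobs : x - A *ᵥ v = (x - A *ᵥ μ) - A *ᵥ (v - μ) := by rw [mulVec_sub]; abel
    have hpost : v - (μ + (P⁻¹ * Aᵀ * R⁻¹) *ᵥ (x - A *ᵥ μ)) =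
        (v - μ) - (P⁻¹ * Aᵀ * R⁻¹) *ᵥ (x - A *ᵥ μ) := by abel
    rw [hobs, hpost, nonsing_inv_nonsing_inv _ hP.det_pos.ne'.isUnit, hwoodbury]
    exact dotProduct_mulVec_add_dotProduct_mulVec_sub_mulVec
      (isHermitian_iff_isSymm.mp hC.inv.isHermitian)
      (isHermitian_iff_isSymm.mp hR.inv.isHermitian) A hP.det_pos.ne'.isUnit _ _

theorem integral_gaussDensity {S : Matrix (Fin K) (Fin K) ℝ} (hS : S.PosDef) (m : Fin K → ℝ) :
    ∫ x, gaussDensity m S x = 1 := by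
  unfold gaussDensity
  rw [integral_const_mul, integral_exp_neg_half_sub_dotProduct_mulVec hS.inv, det_nonsing_inv,
    Ring.inverse_eq_inv', div_inv_eq_mul, Fintype.card_fin]
  exact inv_mul_cancel₀ (Real.sqrt_pos.mpr (by positivity [hS.det_pos])).ne'

theorem integral_gaussDensity_mul_gaussDensity_mulVec {C : Matrix (Fin K) (Fin K) ℝ}
    {R : Matrix (Fin L) (Fin L) ℝ} (hC : C.PosDef) (hR : R.PosDef)
    (A : Matrix (Fin L) (Fin K) ℝ) (μ : Fin K → ℝ) (x : Fin L → ℝ) :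
    ∫ v, gaussDensity μ C v * gaussDensity (A *ᵥ v) R x =
      gaussDensity (A *ᵥ μ) (A * C * Aᵀ + R) x := by
  simp_rw [gaussDensity_mul_gaussDensity_mulVec hC hR]
  rw [integral_const_mul, integral_gaussDensity (hC.inv_add_transpose_mul_inv_mul hR A).inv,
    mul_one]

theorem gaussDensity_mul_gaussDensity_one {S : Matrix (Fin K) (Fin K) ℝ} (hS : S.PosDef)
    (m x y : Fin K → ℝ) :
    gaussDensity m S x * gaussDensity x 1 y =
      gaussDensity m (S + 1) y *
        gaussDensity ((S + 1)⁻¹ *ᵥ m + (S * (S + 1)⁻¹) *ᵥ y) (S * (S + 1)⁻¹) x := by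
  have h := gaussDensity_mul_gaussDensity_mulVec hS .one 1 m x y
  simp only [one_mulVec, transpose_one, inv_one, Matrix.mul_one, Matrix.one_mul,
    hS.inv_add_one_inv] at h
  have hsum : (S + 1)⁻¹ + S * (S + 1)⁻¹ = 1 :=
    calc (S + 1)⁻¹ + S * (S + 1)⁻¹ = (S + 1) * (S + 1)⁻¹ := by
          rw [Matrix.add_mul, Matrix.one_mul, add_comm]
      _ = 1 := mul_nonsing_inv _ (hS.add .one).det_pos.ne'.isUnit
  have hmean : m + (S * (S + 1)⁻¹) *ᵥ (y - m) = (S + 1)⁻¹ *ᵥ m + (S * (S + 1)⁻¹) *ᵥ y :=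
    calc m + (S * (S + 1)⁻¹) *ᵥ (y - m) = (1 - S * (S + 1)⁻¹) *ᵥ m + (S * (S + 1)⁻¹) *ᵥ y := by
          rw [mulVec_sub, sub_mulVec, one_mulVec]
          abel
      _ = _ := by rw [← eq_sub_of_add_eq hsum]
  rwa [hmean] at h

end GaussDensity

/-- the forward-variable recursion.  With `S = A Σ Aᵀ + R`,
`Σ' = S (S + I)⁻¹` and `μ' = (S + I)⁻¹ A μ + Σ' y`, one has for all `x, y`:
`∫ N(x'; μ, Σ) N(x; A x', R) N(y; x, I) dx' = N(y; A μ, S + I) · N(x; μ', Σ')`,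
and `Σ'` is symmetric positive definite. -/
theorem forward_variable_recursion {K : ℕ}
    (A C R : Matrix (Fin K) (Fin K) ℝ) (μ : Fin K → ℝ)
    (hC : C.PosDef) (hR : R.PosDef) :
    ((A * C * Aᵀ + R) * (A * C * Aᵀ + R + 1)⁻¹).PosDef ∧
      ∀ x y : Fin K → ℝ,
        (∫ x' : Fin K → ℝ,
            gaussDensity μ C x' * gaussDensity (A *ᵥ x') R x * gaussDensity x 1 y) =
          gaussDensity (A *ᵥ μ) (A * C * Aᵀ + R + 1) y *
            gaussDensity
              ((A * C * Aᵀ + R + 1)⁻¹ *ᵥ (A *ᵥ μ) +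
                ((A * C * Aᵀ + R) * (A * C * Aᵀ + R + 1)⁻¹) *ᵥ y)
              ((A * C * Aᵀ + R) * (A * C * Aᵀ + R + 1)⁻¹) x := by
  have hS := hC.mul_mul_transpose_add hR A
  refine ⟨?_, fun x y => ?_⟩
  · rw [← hS.inv_add_one_inv]
    exact (hS.inv.add .one).inv
  · rw [integral_mul_const, integral_gaussDensity_mul_gaussDensity_mulVec hC hR,
      gaussDensity_mul_gaussDensity_one hS]
end

section
/- Let (Ω, 𝓕, μ) be a probability space with a filtration (𝓕_n)_{n∈ℕ}, and let (f_n)_{n∈ℕ} be a martingale with respect to this filtration and μ such that f_n ≥ 0 almost everywhere for every n, and ∫ f_0 dμ = 1. Then for every real c > 0, μ{ ω : ∃ n, f_n(ω) ≥ c } ≤ 1/c (Ville's maximal inequality for nonnegative martingales). -/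
open MeasureTheory

/-!
Let `τ` be the first time in `[0, n]` at which `f` reaches `c` (or `n` if it does not).
Optional stopping for the supermartingale `f` gives `𝔼[f_τ] ≤ 𝔼[f_0]`, and since `f ≥ 0` and
`f_τ ≥ c` on the event that `c` is reached by time `n`, Markov's inequality bounds the probability
of that event by `𝔼[f_0] / c`. These events increase to `{∃ n, c ≤ f n}`, so continuity from below
finishes the proof.
-/

namespace MeasureTheory

variable {Ω : Type*} {m : MeasurableSpace Ω} {μ : Measure Ω} {ℱ : Filtration ℕ m}
  {f : ℕ → Ω → ℝ}

theorem Supermartingale.integral_stoppedValue_le_integral_zero [IsFiniteMeasure μ]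
    (hf : Supermartingale f ℱ μ) {τ : Ω → ℕ∞} (hτ : IsStoppingTime ℱ τ) {N : ℕ}
    (hbdd : ∀ ω, τ ω ≤ N) :
    ∫ ω, stoppedValue f τ ω ∂μ ≤ ∫ ω, f 0 ω ∂μ := by
  have h := hf.neg.expected_stoppedValue_mono (isStoppingTime_const ℱ 0) hτ
    (fun _ => zero_le) hbdd
  simpa [stoppedValue, integral_neg] using h

theorem StronglyAdapted.measurableSet_exists_le_le (hf : StronglyAdapted ℱ f) (c : ℝ) (n : ℕ) :
    MeasurableSet {ω | ∃ k ≤ n, c ≤ f k ω} := by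
  simp only [Set.ofPred_exists]
  exact MeasurableSet.iUnion fun k => (MeasurableSet.const (k ≤ n)).inter <|
    measurableSet_le measurable_const ((hf k).mono (ℱ.le k)).measurable

theorem Supermartingale.mul_measure_exists_le_le_integral_zero [IsFiniteMeasure μ]
    (hf : Supermartingale f ℱ μ) (hnonneg : ∀ n, 0 ≤ᵐ[μ] f n) {c : ℝ} (hc : 0 ≤ c) (n : ℕ) :
    ENNReal.ofReal c * μ {ω | ∃ k ≤ n, c ≤ f k ω} ≤ ENNReal.ofReal (∫ ω, f 0 ω ∂μ) := by
  set A := {ω | ∃ k ≤ n, c ≤ f k ω}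
  set τ : Ω → ℕ∞ := fun ω => (hittingBtwn f {y | c ≤ y} 0 n ω : ℕ)
  have hτ : IsStoppingTime ℱ τ :=
    hf.stronglyAdapted.adapted.isStoppingTime_hittingBtwn measurableSet_Ici
  have hbdd : ∀ ω, τ ω ≤ n := fun ω => WithTop.coe_le_coe.2 (hittingBtwn_le ω)
  have hint : Integrable (stoppedValue f τ) μ := integrable_stoppedValue ℕ hτ hf.integrable hbdd
  have hc_le : ∀ ω ∈ A, c ≤ stoppedValue f τ ω := fun ω ⟨k, hkn, hk⟩ =>
    stoppedValue_hittingBtwn_mem ⟨k, ⟨Nat.zero_le k, hkn⟩, hk⟩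
  have hnonneg_τ : 0 ≤ᵐ[μ] stoppedValue f τ := by
    filter_upwards [ae_all_iff.2 hnonneg] with ω hω using hω _
  have key : c * μ.real A ≤ ∫ ω, f 0 ω ∂μ :=
    calc c * μ.real A ≤ ∫ ω in A, stoppedValue f τ ω ∂μ :=
          setIntegral_ge_of_const_le_real (hf.stronglyAdapted.measurableSet_exists_le_le c n)
            (measure_ne_top μ A) hc_le hint.integrableOn
      _ ≤ ∫ ω, stoppedValue f τ ω ∂μ := setIntegral_le_integral hint hnonneg_τ
      _ ≤ ∫ ω, f 0 ω ∂μ := hf.integral_stoppedValue_le_integral_zero hτ hbdd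
  calc ENNReal.ofReal c * μ A = ENNReal.ofReal (c * μ.real A) := by
        rw [ENNReal.ofReal_mul hc, ofReal_measureReal]
    _ ≤ ENNReal.ofReal (∫ ω, f 0 ω ∂μ) := ENNReal.ofReal_le_ofReal key

theorem Supermartingale.measure_exists_le_le_integral_zero_div [IsFiniteMeasure μ]
    (hf : Supermartingale f ℱ μ) (hnonneg : ∀ n, 0 ≤ᵐ[μ] f n) {c : ℝ} (hc : 0 < c) :
    μ {ω | ∃ n, c ≤ f n ω} ≤ ENNReal.ofReal ((∫ ω, f 0 ω ∂μ) / c) := by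
  have hunion : {ω | ∃ n, c ≤ f n ω} = ⋃ n, {ω | ∃ k ≤ n, c ≤ f k ω} := by
    ext ω
    simp only [Set.mem_ofPred_eq, Set.mem_iUnion]
    exact ⟨fun ⟨n, hn⟩ => ⟨n, n, le_rfl, hn⟩, fun ⟨_, k, _, hk⟩ => ⟨k, hk⟩⟩
  have hmono : Monotone fun n => {ω | ∃ k ≤ n, c ≤ f k ω} :=
    fun _ _ hab _ ⟨k, hk, hck⟩ => ⟨k, hk.trans hab, hck⟩
  rw [hunion, hmono.measure_iUnion, ENNReal.ofReal_div_of_pos hc]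
  refine iSup_le fun n => (ENNReal.le_div_iff_mul_le (by simp [hc]) (by simp)).2 ?_
  rw [mul_comm]
  exact hf.mul_measure_exists_le_le_integral_zero hnonneg hc.le n

end MeasureTheory

/-- Ville's maximal inequality.  If `(f_n)` is a nonnegative martingale
with `∫ f_0 dμ = 1` on a probability space, then for every `c > 0`,
`μ{ω : ∃ n, f_n(ω) ≥ c} ≤ 1/c`. -/
theorem ville_maximal_inequality {Ω : Type*} {m : MeasurableSpace Ω}
    (μ : Measure Ω) [IsProbabilityMeasure μ]
    (ℱ : Filtration ℕ m) (f : ℕ → Ω → ℝ)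
    (hf : Martingale f ℱ μ)
    (hnonneg : ∀ n : ℕ, 0 ≤ᵐ[μ] f n)
    (hmean : ∫ ω, f 0 ω ∂μ = 1)
    (c : ℝ) (hc : 0 < c) :
    μ {ω | ∃ n : ℕ, c ≤ f n ω} ≤ ENNReal.ofReal (1 / c) := by
  simpa only [hmean] using hf.supermartingale.measure_exists_le_le_integral_zero_div hnonneg hc
end
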